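/- Two distinct lines of the ceiling z=1 are parallel if and only if the closures of their central projections onto the canvas y=1 meet at a point of the horizon z=0 (assuming neither line is contained in a plane y = const). -/

import Mathlib

/-- Central projection from the origin onto the plane `y = 1`. -/
noncomputable def proj (p : ℝ × ℝ × ℝ) : ℝ × ℝ × ℝ := (p.1 / p.2.1, 1, p.2.2 / p.2.1)

/-- The line through `p` with direction `v`. -/
def lineThrough (p v : ℝ × ℝ × ℝ) : Set (ℝ × ℝ × ℝ) := {q | ∃ t : ℝ, q = p + t • v}

/-- The central projection of a set (only points with nonzero `y`-coordinate project). -/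
noncomputable def projSet (S : Set (ℝ × ℝ × ℝ)) : Set (ℝ × ℝ × ℝ) :=
  {q | ∃ r ∈ S, r.2.1 ≠ 0 ∧ q = proj r}

/-! The image of a ceiling line `p + t • v` is the canvas line `x = a z + b` with its horizon
point `z = 0` removed, where the slope `b = v.1 / v.2.1` depends only on the direction.
Since `{0}ᶜ` is dense in `ℝ`, the closure adds back exactly the vanishing point `(b, 1, 0)`,
so two projected lines share a horizon point iff they have the same slope, which for directions
in the plane `z = 0` means they are proportional. -/

def canvasLine (a b : ℝ) (z : ℝ) : ℝ × ℝ × ℝ := (a * z + b, 1, z)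

lemma continuous_canvasLine (a b : ℝ) : Continuous (canvasLine a b) := by
  unfold canvasLine
  fun_prop

lemma projSet_lineThrough_eq_image_canvasLine {p v : ℝ × ℝ × ℝ} (hp : p.2.2 = 1)
    (hvz : v.2.2 = 0) (hvy : v.2.1 ≠ 0) :
    projSet (lineThrough p v) =
      canvasLine (p.1 - p.2.1 * (v.1 / v.2.1)) (v.1 / v.2.1) '' {0}ᶜ := by
  ext q
  constructor
  · rintro ⟨_, ⟨t, rfl⟩, hy, rfl⟩
    simp only [Prod.fst_add, Prod.snd_add, Prod.smul_fst, Prod.smul_snd, smul_eq_mul] at hy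
    refine ⟨1 / (p.2.1 + t * v.2.1), by simpa using hy, ?_⟩
    simp only [canvasLine, proj, Prod.fst_add, Prod.snd_add, Prod.smul_fst, Prod.smul_snd,
      smul_eq_mul, hp, hvz, Prod.mk.injEq]
    refine ⟨?_, trivial, by ring⟩
    generalize hs : p.2.1 + t * v.2.1 = s at hy ⊢
    field_simp
    linear_combination (-v.1) * hs
  · rintro ⟨z, hz, rfl⟩
    have hz : z ≠ 0 := hz
    -- the point of the line at depth `y = 1 / z`
    have hy : p.2.1 + (1 / z - p.2.1) / v.2.1 * v.2.1 = 1 / z := by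
      field_simp
      ring
    refine ⟨p + ((1 / z - p.2.1) / v.2.1) • v, ⟨_, rfl⟩, ?_, ?_⟩
    · simp only [Prod.fst_add, Prod.snd_add, Prod.smul_fst, Prod.smul_snd, smul_eq_mul, hy]
      exact one_div_ne_zero hz
    · simp only [canvasLine, proj, Prod.fst_add, Prod.snd_add, Prod.smul_fst, Prod.smul_snd,
        smul_eq_mul, hy, hp, hvz, Prod.mk.injEq]
      refine ⟨?_, trivial, by field_simp; ring⟩
      field_simp
      ring

lemma mem_closure_image_canvasLine_iff (a b u : ℝ) :
    ((u, 1, 0) : ℝ × ℝ × ℝ) ∈ closure (canvasLine a b '' {0}ᶜ) ↔ u = b := by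
  constructor
  · intro h
    have hclosed : IsClosed {q : ℝ × ℝ × ℝ | q.1 = a * q.2.2 + b} :=
      isClosed_eq (by fun_prop) (by fun_prop)
    have hsub : canvasLine a b '' {0}ᶜ ⊆ {q : ℝ × ℝ × ℝ | q.1 = a * q.2.2 + b} := by
      rintro _ ⟨z, -, rfl⟩
      rfl
    simpa using closure_minimal hsub hclosed h
  · intro hu
    rw [hu]
    have h₀ : canvasLine a b 0 ∈ canvasLine a b '' closure {0}ᶜ :=
      ⟨0, by simp, rfl⟩
    simpa [canvasLine] using image_closure_subset_closure_image (continuous_canvasLine a b) h₀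

lemma horizon_mem_closure_projSet_iff {p v : ℝ × ℝ × ℝ} (hp : p.2.2 = 1) (hvz : v.2.2 = 0)
    (hvy : v.2.1 ≠ 0) (u : ℝ) :
    ((u, 1, 0) : ℝ × ℝ × ℝ) ∈ closure (projSet (lineThrough p v)) ↔ u = v.1 / v.2.1 := by
  rw [projSet_lineThrough_eq_image_canvasLine hp hvz hvy, mem_closure_image_canvasLine_iff]

lemma exists_smul_eq_iff_div_eq {v₁ v₂ : ℝ × ℝ × ℝ} (hv₁z : v₁.2.2 = 0) (hv₂z : v₂.2.2 = 0)
    (hv₁y : v₁.2.1 ≠ 0) (hv₂y : v₂.2.1 ≠ 0) :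
    (∃ k : ℝ, v₂ = k • v₁) ↔ v₁.1 / v₁.2.1 = v₂.1 / v₂.2.1 := by
  constructor
  · rintro ⟨k, rfl⟩
    have hk : k ≠ 0 := left_ne_zero_of_mul hv₂y
    simp only [Prod.smul_fst, Prod.smul_snd, smul_eq_mul]
    field_simp
  · intro h
    refine ⟨v₂.2.1 / v₁.2.1, ?_⟩
    simp only [Prod.ext_iff, Prod.smul_fst, Prod.smul_snd, smul_eq_mul, hv₁z, hv₂z, mul_zero]
    field_simp at h ⊢
    exact ⟨by linarith, trivial, trivial⟩

theorem stmt_13_general (p₁ v₁ p₂ v₂ : ℝ × ℝ × ℝ)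
    (hp₁ : p₁.2.2 = 1) (hp₂ : p₂.2.2 = 1) (hv₁z : v₁.2.2 = 0) (hv₂z : v₂.2.2 = 0)
    (hv₁y : v₁.2.1 ≠ 0) (hv₂y : v₂.2.1 ≠ 0) :
    (∃ k : ℝ, v₂ = k • v₁) ↔
      ∃ u : ℝ, ((u, 1, 0) : ℝ × ℝ × ℝ) ∈
        closure (projSet (lineThrough p₁ v₁)) ∩ closure (projSet (lineThrough p₂ v₂)) := by
  simp only [Set.mem_inter_iff, horizon_mem_closure_projSet_iff hp₁ hv₁z hv₁y,
    horizon_mem_closure_projSet_iff hp₂ hv₂z hv₂y, exists_eq_left]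
  exact exists_smul_eq_iff_div_eq hv₁z hv₂z hv₁y hv₂y

/-- Two distinct lines of the ceiling `z = 1` (neither contained in a plane `y = const`)
are parallel iff the closures of their central projections onto the canvas `y = 1` meet
at a point of the horizon `z = 0`. -/
theorem stmt_13 (p₁ v₁ p₂ v₂ : ℝ × ℝ × ℝ)
    (hp₁ : p₁.2.2 = 1) (hp₂ : p₂.2.2 = 1) (hv₁z : v₁.2.2 = 0) (hv₂z : v₂.2.2 = 0)
    (hv₁ : v₁ ≠ 0) (hv₂ : v₂ ≠ 0) (hv₁y : v₁.2.1 ≠ 0) (hv₂y : v₂.2.1 ≠ 0)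
    (hne : lineThrough p₁ v₁ ≠ lineThrough p₂ v₂) :
    (∃ k : ℝ, v₂ = k • v₁) ↔
      ∃ u : ℝ, ((u, 1, 0) : ℝ × ℝ × ℝ) ∈
        closure (projSet (lineThrough p₁ v₁)) ∩ closure (projSet (lineThrough p₂ v₂)) :=
  stmt_13_general p₁ v₁ p₂ v₂ hp₁ hp₂ hv₁z hv₂z hv₁y hv₂y
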